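/- arXiv:2202.01250 — 2 statements merged into one kernel-verified Lean document; each statement's English description precedes it below -/
import Mathlib

section
/- Let {X_t}_{t∈ℕ⁺} be adapted to {F_t} with E[X_t | F_{t−1}] = μ for all t ∈ ℕ⁺ and E[(X_t − μ)² | F_{t−1}] ≤ σ_t² almost surely for all t, let φ be a Catoni-type influence function, let α ∈ (0,1), and suppose {λ_t}_{t∈ℕ⁺} (positive) and {σ_t}_{t∈ℕ⁺} (nonnegative) are nonrandom sequences. Fix ε ∈ (0,1) and t ∈ ℕ⁺, and suppose (Σ_{i=1}^t λ_i)² − 2(Σ_{i=1}^t λ_i²)( Σ_{i=1}^t λ_i²σ_i² + log(2/ε) + log(2/α) ) ≥ 0. Then with probability at least 1 − ε, the diameter of CI_t^{C'} = { m ∈ ℝ : −(Σλ_i²σ_i²)/2 − log(2/α) ≤ Σ_{i=1}^t φ(λ_i(X_i − m)) ≤ (Σλ_i²σ_i²)/2 + log(2/α) } is at most 4( Σ_{i=1}^t λ_i²σ_i² + log(2/ε) + log(2/α) ) / Σ_{i=1}^t λ_i. -/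
open MeasureTheory ProbabilityTheory Filter Finset

section CatoniAux

variable {Ω : Type*} {mΩ : MeasurableSpace Ω} {P : Measure Ω} [IsProbabilityMeasure P]

lemma aux_pullout {F : MeasurableSpace Ω} (hF : F ≤ mΩ) {Z g : Ω → ℝ} {c : ℝ}
    (hZmeas : StronglyMeasurable[F] Z) (hZnn : ∀ ω, 0 ≤ Z ω) (hZint : Integrable Z P)
    (hgnn : ∀ ω, 0 ≤ g ω) (hgint : Integrable g P)
    (hcond : P[g|F] ≤ᵐ[P] fun _ => c) :
    Integrable (fun ω => Z ω * g ω) P ∧ ∫ ω, Z ω * g ω ∂P ≤ c * ∫ ω, Z ω ∂P := by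
  have hc : 0 ≤ c := by
    have h1 : 0 ≤ᵐ[P] P[g|F] := condExp_nonneg (Eventually.of_forall hgnn)
    obtain ⟨ω, h2, h3⟩ := (h1.and hcond).exists
    exact le_trans h2 h3
  set Zn : ℕ → Ω → ℝ := fun n ω => min (Z ω) n with hZn
  have hZn_meas : ∀ n, StronglyMeasurable[F] (Zn n) := fun n =>
    (hZmeas.measurable.min measurable_const).stronglyMeasurable
  have hZn_nn : ∀ n ω, 0 ≤ Zn n ω := fun n ω => le_min (hZnn ω) (n.cast_nonneg)
  have hZn_le : ∀ n ω, Zn n ω ≤ Z ω := fun n ω => min_le_left _ _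
  have hZn_bdd : ∀ n ω, ‖Zn n ω‖ ≤ (n : ℝ) := fun n ω => by
    rw [Real.norm_eq_abs, abs_of_nonneg (hZn_nn n ω)]; exact min_le_right _ _
  have hZn_int : ∀ n, Integrable (Zn n) P :=
    fun n => Integrable.mono (integrable_const (n : ℝ))
      ((hZn_meas n).mono hF).aestronglyMeasurable
      (Eventually.of_forall fun ω => by
        rw [Real.norm_eq_abs (n : ℝ)]; exact (hZn_bdd n ω).trans (le_abs_self _))
  have hint : ∀ n, Integrable (fun ω => Zn n ω * g ω) P := fun n =>
    hgint.bdd_mul ((hZn_meas n).mono hF).aestronglyMeasurable (Eventually.of_forall (hZn_bdd n))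
  have key : ∀ n, ∫ ω, Zn n ω * g ω ∂P ≤ c * ∫ ω, Z ω ∂P := by
    intro n
    have hpull : P[fun ω => Zn n ω * g ω | F] =ᵐ[P] fun ω => Zn n ω * (P[g|F]) ω :=
      condExp_mul_of_stronglyMeasurable_left (hZn_meas n) (hint n) hgint
    have h1 : ∫ ω, Zn n ω * g ω ∂P = ∫ ω, (P[fun ω => Zn n ω * g ω|F]) ω ∂P :=
      (integral_condExp hF).symm
    rw [h1, integral_congr_ae hpull]
    have hint2 : Integrable (fun ω => Zn n ω * (P[g|F]) ω) P :=
      integrable_condExp.bdd_mul ((hZn_meas n).mono hF).aestronglyMeasurable (Eventually.of_forall (hZn_bdd n))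
    have h2 : ∫ ω, Zn n ω * (P[g|F]) ω ∂P ≤ ∫ ω, Zn n ω * c ∂P := by
      refine integral_mono_ae hint2 ((hZn_int n).mul_const c) ?_
      filter_upwards [hcond] with ω hω
      exact mul_le_mul_of_nonneg_left hω (hZn_nn n ω)
    refine h2.trans ?_
    rw [integral_mul_const]
    rw [mul_comm c]
    exact mul_le_mul_of_nonneg_right
      (integral_mono (hZn_int n) hZint (fun ω => hZn_le n ω)) hc
  have hcZ : 0 ≤ c * ∫ ω, Z ω ∂P :=
    mul_nonneg hc (integral_nonneg hZnn)
  have hsup : ∀ ω, (⨆ n, ENNReal.ofReal (Zn n ω * g ω)) = ENNReal.ofReal (Z ω * g ω) := by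
    intro ω
    apply le_antisymm
    · exact iSup_le fun n =>
        ENNReal.ofReal_le_ofReal (mul_le_mul_of_nonneg_right (hZn_le n ω) (hgnn ω))
    · have hmin : Zn ⌈Z ω⌉₊ ω = Z ω := min_eq_left (Nat.le_ceil _)
      calc ENNReal.ofReal (Z ω * g ω) = ENNReal.ofReal (Zn ⌈Z ω⌉₊ ω * g ω) := by rw [hmin]
        _ ≤ ⨆ n, ENNReal.ofReal (Zn n ω * g ω) := le_iSup (fun n => ENNReal.ofReal (Zn n ω * g ω)) ⌈Z ω⌉₊
  have hlim : ∫⁻ ω, ENNReal.ofReal (Z ω * g ω) ∂P ≤ ENNReal.ofReal (c * ∫ ω, Z ω ∂P) := by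
    have hmono : ∀ᵐ ω ∂P, Monotone fun n => ENNReal.ofReal (Zn n ω * g ω) :=
      Eventually.of_forall fun ω a b hab => ENNReal.ofReal_le_ofReal
        (mul_le_mul_of_nonneg_right (min_le_min le_rfl (Nat.cast_le.2 hab)) (hgnn ω))
    have haem : ∀ n, AEMeasurable (fun ω => ENNReal.ofReal (Zn n ω * g ω)) P :=
      fun n => ENNReal.measurable_ofReal.comp_aemeasurable
        (hint n).aestronglyMeasurable.aemeasurable
    calc ∫⁻ ω, ENNReal.ofReal (Z ω * g ω) ∂P
        = ∫⁻ ω, ⨆ n, ENNReal.ofReal (Zn n ω * g ω) ∂P := by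
          refine lintegral_congr fun ω => (hsup ω).symm
      _ = ⨆ n, ∫⁻ ω, ENNReal.ofReal (Zn n ω * g ω) ∂P := lintegral_iSup' haem hmono
      _ ≤ ENNReal.ofReal (c * ∫ ω, Z ω ∂P) := by
          refine iSup_le fun n => ?_
          rw [← ofReal_integral_eq_lintegral_ofReal (hint n)
            (Eventually.of_forall fun ω => mul_nonneg (hZn_nn n ω) (hgnn ω))]
          exact ENNReal.ofReal_le_ofReal (key n)
  have haesm : AEStronglyMeasurable[mΩ] (fun ω => Z ω * g ω) P :=
    ((hZmeas.mono hF).aestronglyMeasurable).mul hgint.aestronglyMeasurable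
  have hZg_int : Integrable (fun ω => Z ω * g ω) P := by
    refine ⟨haesm, ?_⟩
    rw [hasFiniteIntegral_iff_norm]
    have : ∀ ω, ENNReal.ofReal ‖Z ω * g ω‖ = ENNReal.ofReal (Z ω * g ω) := fun ω => by
      rw [Real.norm_eq_abs, abs_of_nonneg (mul_nonneg (hZnn ω) (hgnn ω))]
    simp_rw [this]
    exact hlim.trans_lt ENNReal.ofReal_lt_top
  refine ⟨hZg_int, ?_⟩
  have h1 : ∫ ω, Z ω * g ω ∂P
      = (∫⁻ ω, ENNReal.ofReal (Z ω * g ω) ∂P).toReal :=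
    integral_eq_lintegral_of_nonneg_ae
      (Eventually.of_forall fun ω => mul_nonneg (hZnn ω) (hgnn ω)) haesm
  rw [h1]
  calc (∫⁻ ω, ENNReal.ofReal (Z ω * g ω) ∂P).toReal
      ≤ (ENNReal.ofReal (c * ∫ ω, Z ω ∂P)).toReal :=
        ENNReal.toReal_mono ENNReal.ofReal_ne_top hlim
    _ = c * ∫ ω, Z ω ∂P := ENNReal.toReal_ofReal hcZ


lemma aux_prod_bound
    (ℱ : Filtration ℕ mΩ) (X : ℕ → Ω → ℝ) (l s : ℕ → ℝ) (μ : ℝ) (φ : ℝ → ℝ)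
    (hφ_meas : Measurable φ)
    (hX_adapted : Adapted ℱ X)
    (hX_sq : ∀ t, 1 ≤ t → MemLp (X t) 2 P)
    (hmean : ∀ t, 1 ≤ t → P[X t | ℱ (t - 1)] =ᵐ[P] fun _ => μ)
    (hvar : ∀ t, 1 ≤ t →
      ∀ᵐ ω ∂P, (P[fun ω' => (X t ω' - μ) ^ 2 | ℱ (t - 1)]) ω ≤ (s t) ^ 2)
    {θ : ℝ} (hφθ : ∀ x, Real.exp (θ * φ x) ≤ 1 + θ * x + x ^ 2 / 2)
    (m : ℝ) (t : ℕ) :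
    Integrable (fun ω => ∏ i ∈ Finset.Icc 1 t, Real.exp (θ * φ (l i * (X i ω - m)))) P ∧
    ∫ ω, ∏ i ∈ Finset.Icc 1 t, Real.exp (θ * φ (l i * (X i ω - m))) ∂P ≤
      Real.exp (∑ i ∈ Finset.Icc 1 t,
        (θ * (l i * (μ - m)) + (l i) ^ 2 * ((s i) ^ 2 + (μ - m) ^ 2) / 2)) := by
  induction t with
  | zero =>
      constructor
      · simpa using integrable_const (1 : ℝ)
      · simp
  | succ t ih =>
      -- notation
      set i := t + 1 with hi
      have hi1 : 1 ≤ i := Nat.succ_le_succ t.zero_le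
      set Y : Ω → ℝ := fun ω => l i * (X i ω - m) with hY
      set g : Ω → ℝ := fun ω => Real.exp (θ * φ (Y ω)) with hg
      have hXmeas : Measurable (X i) := ((hX_adapted i).mono (ℱ.le i) le_rfl)
      have hYmeas : Measurable Y := (hXmeas.sub measurable_const).const_mul (l i)
      have hg_meas : Measurable g :=
        Real.measurable_exp.comp ((hφ_meas.comp hYmeas).const_mul θ)
      have hg_nn : ∀ ω, 0 ≤ g ω := fun ω => (Real.exp_pos _).le
      -- the dominating quadratic function
      set hfun : Ω → ℝ := fun ω => 1 + θ * Y ω + (Y ω) ^ 2 / 2 with hhfun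
      have hg_le : ∀ ω, g ω ≤ hfun ω := fun ω => hφθ (Y ω)
      have hX2 : MemLp (X i) 2 P := hX_sq i hi1
      have hX_int : Integrable (X i) P := hX2.integrable one_le_two
      have hsq_int : Integrable (fun ω => (X i ω - μ) ^ 2) P :=
        (hX2.sub (memLp_const μ)).integrable_sq
      -- constants
      set c₂ : ℝ := (l i) ^ 2 / 2 with hc₂
      set c₁ : ℝ := θ * l i + (l i) ^ 2 * (μ - m) with hc₁
      set c₀ : ℝ := 1 - θ * l i * m - (l i) ^ 2 * (μ - m) * μ + (l i) ^ 2 * (μ - m) ^ 2 / 2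
        with hc₀
      have hfun_eq : ∀ ω, hfun ω = (c₀ + c₁ * X i ω) + c₂ * (X i ω - μ) ^ 2 := by
        intro ω; simp only [hhfun, hY, hc₀, hc₁, hc₂]; ring
      have hint1 : Integrable (fun ω => c₀ + c₁ * X i ω) P :=
        (integrable_const c₀).add (hX_int.const_mul c₁)
      have hint2 : Integrable (fun ω => c₂ * (X i ω - μ) ^ 2) P := hsq_int.const_mul c₂
      have hfun_int : Integrable hfun P := by
        have := hint1.add hint2
        refine this.congr (Eventually.of_forall fun ω => ?_)
        rw [Pi.add_apply, ← hfun_eq ω]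
      have hfun_nn : ∀ ω, 0 ≤ hfun ω := fun ω => (hg_nn ω).trans (hg_le ω)
      have hg_int : Integrable g P := by
        refine Integrable.mono hfun_int hg_meas.aestronglyMeasurable
          (Eventually.of_forall fun ω => ?_)
        rw [Real.norm_eq_abs, Real.norm_eq_abs, abs_of_nonneg (hg_nn ω),
          abs_of_nonneg (hfun_nn ω)]
        exact hg_le ω
      -- conditional expectation bound
      set b : ℝ := θ * (l i * (μ - m)) + (l i) ^ 2 * ((s i) ^ 2 + (μ - m) ^ 2) / 2 with hb
      have hce : P[g | ℱ t] ≤ᵐ[P] fun _ => Real.exp b := by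
        have h1 : P[g|ℱ t] ≤ᵐ[P] P[hfun|ℱ t] :=
          condExp_mono hg_int hfun_int (Eventually.of_forall hg_le)
        have e0 : P[hfun|ℱ t]
            =ᵐ[P] P[fun ω => c₀ + c₁ * X i ω|ℱ t] + P[fun ω => c₂ * (X i ω - μ) ^ 2|ℱ t] := by
          have : hfun = (fun ω => c₀ + c₁ * X i ω) + fun ω => c₂ * (X i ω - μ) ^ 2 := by
            funext ω; exact hfun_eq ω
          rw [this]; exact condExp_add hint1 hint2 _
        have e1 : P[fun ω => c₀ + c₁ * X i ω|ℱ t]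
            =ᵐ[P] (fun _ => c₀) + P[fun ω => c₁ * X i ω|ℱ t] := by
          have : (fun ω => c₀ + c₁ * X i ω) = (fun _ => c₀) + fun ω => c₁ * X i ω := rfl
          rw [this]
          refine (condExp_add (integrable_const c₀) (hX_int.const_mul c₁) _).trans ?_
          rw [condExp_const (ℱ.le t)]
        have e2 : P[fun ω => c₁ * X i ω|ℱ t] =ᵐ[P] fun ω => c₁ * (P[X i|ℱ t]) ω := by
          have : (fun ω => c₁ * X i ω) = c₁ • X i := rfl
          rw [this]
          exact (condExp_smul c₁ (X i) _).trans (by rfl)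
        have e3 : P[fun ω => c₂ * (X i ω - μ) ^ 2|ℱ t]
            =ᵐ[P] fun ω => c₂ * (P[fun ω' => (X i ω' - μ) ^ 2|ℱ t]) ω := by
          have : (fun ω => c₂ * (X i ω - μ) ^ 2) = c₂ • fun ω => (X i ω - μ) ^ 2 := rfl
          rw [this]
          exact (condExp_smul c₂ (fun ω => (X i ω - μ) ^ 2) _).trans (by rfl)
        have hmean' : P[X i|ℱ t] =ᵐ[P] fun _ => μ := by
          have := hmean i hi1
          simpa [hi] using this
        have hvar' : ∀ᵐ ω ∂P, (P[fun ω' => (X i ω' - μ) ^ 2|ℱ t]) ω ≤ (s i) ^ 2 := by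
          have := hvar i hi1
          simpa [hi] using this
        filter_upwards [h1, e0, e1, e2, e3, hmean', hvar'] with ω w1 w0 we1 we2 we3 wm wv
        have hval : (P[hfun|ℱ t]) ω ≤ c₀ + c₁ * μ + c₂ * (s i) ^ 2 := by
          rw [w0, Pi.add_apply, we1, Pi.add_apply, we2, we3, wm]
          have hc2nn : 0 ≤ c₂ := by positivity
          nlinarith [mul_le_mul_of_nonneg_left wv hc2nn]
        refine (w1.trans hval).trans ?_
        have : c₀ + c₁ * μ + c₂ * (s i) ^ 2 = b + 1 := by
          simp only [hc₀, hc₁, hc₂, hb]; ring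
        rw [this]
        exact Real.add_one_le_exp b
      -- the product over Icc 1 t
      set Z : Ω → ℝ := fun ω => ∏ j ∈ Finset.Icc 1 t, Real.exp (θ * φ (l j * (X j ω - m)))
        with hZ
      have hZmeas : StronglyMeasurable[ℱ t] Z := by
        refine Measurable.stronglyMeasurable ?_
        refine Finset.measurable_prod _ (fun j hj => ?_)
        have hjt : j ≤ t := (Finset.mem_Icc.1 hj).2
        have : Measurable[ℱ t] (X j) :=
          ((hX_adapted j).mono (ℱ.mono hjt) le_rfl)
        exact Real.measurable_exp.comp
          ((hφ_meas.comp ((this.sub measurable_const).const_mul (l j))).const_mul θ)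
      have hZnn : ∀ ω, 0 ≤ Z ω := fun ω =>
        Finset.prod_nonneg fun j _ => (Real.exp_pos _).le
      obtain ⟨ihint, ihle⟩ := ih
      obtain ⟨hZg_int, hZg_le⟩ :=
        aux_pullout (ℱ.le t) hZmeas hZnn ihint hg_nn hg_int hce
      have hprod_eq : ∀ ω, (∏ j ∈ Finset.Icc 1 (t + 1),
          Real.exp (θ * φ (l j * (X j ω - m)))) = Z ω * g ω := fun ω => by
        rw [Finset.prod_Icc_succ_top (Nat.succ_le_succ t.zero_le)]
      constructor
      · exact hZg_int.congr (Eventually.of_forall fun ω => (hprod_eq ω).symm)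
      · rw [show (fun ω => ∏ j ∈ Finset.Icc 1 (t+1), Real.exp (θ * φ (l j * (X j ω - m))))
            = fun ω => Z ω * g ω from funext hprod_eq] at *
        calc ∫ ω, Z ω * g ω ∂P ≤ Real.exp b * ∫ ω, Z ω ∂P := hZg_le
          _ ≤ Real.exp b * Real.exp (∑ j ∈ Finset.Icc 1 t,
              (θ * (l j * (μ - m)) + (l j) ^ 2 * ((s j) ^ 2 + (μ - m) ^ 2) / 2)) :=
            mul_le_mul_of_nonneg_left ihle (Real.exp_pos _).le
          _ = Real.exp (∑ j ∈ Finset.Icc 1 (t + 1),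
              (θ * (l j * (μ - m)) + (l j) ^ 2 * ((s j) ^ 2 + (μ - m) ^ 2) / 2)) := by
            rw [← Real.exp_add, Finset.sum_Icc_succ_top (Nat.succ_le_succ t.zero_le)]
            exact congrArg Real.exp (add_comm _ _)


end CatoniAux

section CatoniAux2

variable {Ω : Type*} {mΩ : MeasurableSpace Ω} {P : Measure Ω} [IsProbabilityMeasure P]

lemma aux_markov {f : Ω → ℝ} (hf : Integrable (fun ω => Real.exp (f ω)) P)
    {b : ℝ} (hb : ∫ ω, Real.exp (f ω) ∂P ≤ Real.exp b) (c : ℝ) :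
    P {ω | c ≤ f ω} ≤ ENNReal.ofReal (Real.exp (b - c)) := by
  have h1 : {ω | c ≤ f ω} = {ω | Real.exp c ≤ Real.exp (f ω)} := by
    ext ω; simp [Real.exp_le_exp]
  have h2 := mul_meas_ge_le_integral_of_nonneg
    (Eventually.of_forall fun ω => (Real.exp_pos (f ω)).le) hf (Real.exp c)
  rw [← h1] at h2
  have h3 : (P {ω | c ≤ f ω}).toReal ≤ Real.exp (b - c) := by
    rw [Real.exp_sub, le_div_iff₀ (Real.exp_pos c), mul_comm]
    rw [measureReal_def] at h2
    linarith
  calc P {ω | c ≤ f ω} = ENNReal.ofReal (P {ω | c ≤ f ω}).toReal :=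
        (ENNReal.ofReal_toReal (measure_ne_top P _)).symm
    _ ≤ ENNReal.ofReal (Real.exp (b - c)) := ENNReal.ofReal_le_ofReal h3


end CatoniAux2

set_option maxHeartbeats 2000000 in
/-- **Width of the heteroscedastic Catoni-style confidence sequence.** With nonrandom
positive coefficients `l` and nonrandom nonnegative variance bounds `s` satisfying the
quadratic condition, with probability at least `1-ε` the diameter (`sSup - sInf`) of
`CI_t^{C'}` is at most `4(∑ l_i² s_i² + log(2/ε) + log(2/α)) / ∑ l_i`. -/
theorem catoni_confidence_sequence_width_heteroscedastic
    {Ω : Type*} {mΩ : MeasurableSpace Ω} {P : Measure Ω} [IsProbabilityMeasure P]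
    (ℱ : Filtration ℕ mΩ) (X : ℕ → Ω → ℝ) (l s : ℕ → ℝ) (μ α ε : ℝ) (φ : ℝ → ℝ)
    (hα : α ∈ Set.Ioo (0 : ℝ) 1) (hε : ε ∈ Set.Ioo (0 : ℝ) 1)
    (hφ_mono : Monotone φ)
    (hφ_lb : ∀ x : ℝ, -Real.log (1 - x + x ^ 2 / 2) ≤ φ x)
    (hφ_ub : ∀ x : ℝ, φ x ≤ Real.log (1 + x + x ^ 2 / 2))
    (hX_adapted : Adapted ℱ X)
    (hX_sq : ∀ t, 1 ≤ t → MemLp (X t) 2 P)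
    (hmean : ∀ t, 1 ≤ t → P[X t | ℱ (t - 1)] =ᵐ[P] fun _ => μ)
    (hvar : ∀ t, 1 ≤ t →
      ∀ᵐ ω ∂P, (P[fun ω' => (X t ω' - μ) ^ 2 | ℱ (t - 1)]) ω ≤ (s t) ^ 2)
    (hl_pos : ∀ t, 1 ≤ t → 0 < l t)
    (hs_nonneg : ∀ t, 1 ≤ t → 0 ≤ s t)
    (t : ℕ) (ht : 1 ≤ t)
    (hquad : 0 ≤ (∑ i ∈ Finset.Icc 1 t, l i) ^ 2 -
      2 * (∑ i ∈ Finset.Icc 1 t, (l i) ^ 2) *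
        ((∑ i ∈ Finset.Icc 1 t, (l i) ^ 2 * (s i) ^ 2) +
          Real.log (2 / ε) + Real.log (2 / α))) :
    ENNReal.ofReal (1 - ε) ≤
      P {ω |
        sSup {m : ℝ |
          -((∑ i ∈ Finset.Icc 1 t, (l i) ^ 2 * (s i) ^ 2) / 2) - Real.log (2 / α) ≤
            (∑ i ∈ Finset.Icc 1 t, φ (l i * (X i ω - m))) ∧
          (∑ i ∈ Finset.Icc 1 t, φ (l i * (X i ω - m))) ≤
            (∑ i ∈ Finset.Icc 1 t, (l i) ^ 2 * (s i) ^ 2) / 2 + Real.log (2 / α)} -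
        sInf {m : ℝ |
          -((∑ i ∈ Finset.Icc 1 t, (l i) ^ 2 * (s i) ^ 2) / 2) - Real.log (2 / α) ≤
            (∑ i ∈ Finset.Icc 1 t, φ (l i * (X i ω - m))) ∧
          (∑ i ∈ Finset.Icc 1 t, φ (l i * (X i ω - m))) ≤
            (∑ i ∈ Finset.Icc 1 t, (l i) ^ 2 * (s i) ^ 2) / 2 + Real.log (2 / α)} ≤
        4 * ((∑ i ∈ Finset.Icc 1 t, (l i) ^ 2 * (s i) ^ 2) +
          Real.log (2 / ε) + Real.log (2 / α)) / ∑ i ∈ Finset.Icc 1 t, l i} := by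
  obtain ⟨hα0, hα1⟩ := hα
  obtain ⟨hε0, hε1⟩ := hε
  have hφ_meas : Measurable φ := hφ_mono.measurable
  -- pointwise bounds on exp (± φ)
  have hφ1 : ∀ x : ℝ, Real.exp ((1:ℝ) * φ x) ≤ 1 + (1:ℝ) * x + x ^ 2 / 2 := by
    intro x
    have hpos : 0 < 1 + x + x ^ 2 / 2 := by nlinarith [sq_nonneg (x + 1)]
    have h := Real.exp_le_exp.2 (hφ_ub x)
    rw [Real.exp_log hpos] at h
    rw [one_mul, one_mul]
    exact h
  have hφ2 : ∀ x : ℝ, Real.exp ((-1:ℝ) * φ x) ≤ 1 + (-1:ℝ) * x + x ^ 2 / 2 := by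
    intro x
    have hpos : 0 < 1 - x + x ^ 2 / 2 := by nlinarith [sq_nonneg (x - 1)]
    have h := Real.exp_le_exp.2 (show -φ x ≤ Real.log (1 - x + x ^ 2 / 2) by
      linarith [hφ_lb x])
    rw [Real.exp_log hpos] at h
    rw [show (-1:ℝ) * φ x = -φ x by ring]
    linarith
  -- abbreviations
  set V := ∑ i ∈ Finset.Icc 1 t, (l i) ^ 2 * (s i) ^ 2 with hV
  set L := ∑ i ∈ Finset.Icc 1 t, l i with hL
  set A := ∑ i ∈ Finset.Icc 1 t, (l i) ^ 2 with hA
  set D := V + Real.log (2 / ε) + Real.log (2 / α) with hD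
  have hmem : (1 : ℕ) ∈ Finset.Icc 1 t := Finset.mem_Icc.2 ⟨le_refl 1, ht⟩
  have hLpos : 0 < L := Finset.sum_pos' (fun i hi => (hl_pos i (Finset.mem_Icc.1 hi).1).le)
    ⟨1, hmem, hl_pos 1 le_rfl⟩
  have hApos : 0 < A := Finset.sum_pos' (fun i _ => sq_nonneg _)
    ⟨1, hmem, by have := hl_pos 1 le_rfl; positivity⟩
  have hVnn : 0 ≤ V := Finset.sum_nonneg fun i _ => by positivity
  have hlogε : 0 < Real.log (2 / ε) := Real.log_pos (by rw [lt_div_iff₀ hε0]; linarith)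
  have hlogα : 0 < Real.log (2 / α) := Real.log_pos (by rw [lt_div_iff₀ hα0]; linarith)
  have hDpos : 0 < D := by rw [hD]; linarith
  set S := Real.sqrt (L ^ 2 - 2 * A * D) with hS
  have hquad' : (0:ℝ) ≤ L ^ 2 - 2 * A * D := hquad
  have hS2 : S ^ 2 = L ^ 2 - 2 * A * D := Real.sq_sqrt hquad'
  have hSnn : 0 ≤ S := Real.sqrt_nonneg _
  have hSL : S ≤ L := by
    have h := Real.sqrt_le_sqrt (show L ^ 2 - 2 * A * D ≤ L ^ 2 by nlinarith)
    rwa [Real.sqrt_sq hLpos.le] at h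
  set y := (L - S) / A with hy
  have hynn : 0 ≤ y := div_nonneg (by linarith) hApos.le
  have hid : L * y - A * y ^ 2 / 2 = D := by
    rw [hy]; field_simp; nlinarith [hS2]
  have hy2 : y ≤ 2 * D / L := by
    rw [hy, div_le_div_iff₀ hApos hLpos]
    nlinarith [hS2]
  -- the generic sum computation
  have hsum : ∀ (θ m : ℝ),
      (∑ i ∈ Finset.Icc 1 t,
        (θ * (l i * (μ - m)) + (l i) ^ 2 * ((s i) ^ 2 + (μ - m) ^ 2) / 2))
      = θ * (μ - m) * L + V / 2 + (μ - m) ^ 2 / 2 * A := by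
    intro θ m
    calc (∑ i ∈ Finset.Icc 1 t,
          (θ * (l i * (μ - m)) + (l i) ^ 2 * ((s i) ^ 2 + (μ - m) ^ 2) / 2))
        = ∑ i ∈ Finset.Icc 1 t, ((θ * (μ - m)) * l i
            + (((1:ℝ)/2) * ((l i) ^ 2 * (s i) ^ 2) + ((μ - m) ^ 2 / 2) * (l i) ^ 2)) :=
          Finset.sum_congr rfl fun i _ => by ring
      _ = θ * (μ - m) * L + V / 2 + (μ - m) ^ 2 / 2 * A := by
          rw [Finset.sum_add_distrib, Finset.sum_add_distrib,
            ← Finset.mul_sum, ← Finset.mul_sum, ← Finset.mul_sum, ← hL, ← hV, ← hA]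
          ring
  set mp : ℝ := μ + y with hmp
  set mm : ℝ := μ - y with hmm
  -- apply the product bound with θ = 1 at mp and θ = -1 at mm
  obtain ⟨intp, lep⟩ := aux_prod_bound ℱ X l s μ φ hφ_meas hX_adapted hX_sq hmean hvar
    (θ := 1) hφ1 mp t
  obtain ⟨intm, lem1⟩ := aux_prod_bound ℱ X l s μ φ hφ_meas hX_adapted hX_sq hmean hvar
    (θ := -1) hφ2 mm t
  set fp : Ω → ℝ := fun ω => ∑ i ∈ Finset.Icc 1 t, φ (l i * (X i ω - mp)) with hfp
  set gm : Ω → ℝ := fun ω => ∑ i ∈ Finset.Icc 1 t, -φ (l i * (X i ω - mm)) with hgm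
  have hexpp : ∀ ω, (∏ i ∈ Finset.Icc 1 t, Real.exp ((1:ℝ) * φ (l i * (X i ω - mp))))
      = Real.exp (fp ω) := fun ω => by
    rw [← Real.exp_sum, hfp]; simp
  have hexpm : ∀ ω, (∏ i ∈ Finset.Icc 1 t, Real.exp ((-1:ℝ) * φ (l i * (X i ω - mm))))
      = Real.exp (gm ω) := fun ω => by
    rw [← Real.exp_sum, hgm]; simp
  set b0 : ℝ := V / 2 - D with hb0
  have hbsump : (∑ i ∈ Finset.Icc 1 t,
      ((1:ℝ) * (l i * (μ - mp)) + (l i) ^ 2 * ((s i) ^ 2 + (μ - mp) ^ 2) / 2)) = b0 := by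
    rw [hsum 1 mp, hb0, hmp]
    have h1 : μ - (μ + y) = -y := by ring
    rw [h1]
    linear_combination -hid
  have hbsumm : (∑ i ∈ Finset.Icc 1 t,
      ((-1:ℝ) * (l i * (μ - mm)) + (l i) ^ 2 * ((s i) ^ 2 + (μ - mm) ^ 2) / 2)) = b0 := by
    rw [hsum (-1) mm, hb0, hmm]
    have h1 : μ - (μ - y) = y := by ring
    rw [h1]
    linear_combination -hid
  set c0 : ℝ := b0 + Real.log (2 / ε) with hc0
  have hc0val : c0 = -(V / 2) - Real.log (2 / α) := by
    rw [hc0, hb0, hD]; ring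
  -- Markov bounds
  have hPp : P {ω | c0 ≤ fp ω} ≤ ENNReal.ofReal (ε / 2) := by
    have hint : Integrable (fun ω => Real.exp (fp ω)) P :=
      intp.congr (Eventually.of_forall fun ω => (hexpp ω))
    have hle : ∫ ω, Real.exp (fp ω) ∂P ≤ Real.exp b0 := by
      rw [show (fun ω => Real.exp (fp ω))
          = fun ω => ∏ i ∈ Finset.Icc 1 t, Real.exp ((1:ℝ) * φ (l i * (X i ω - mp)))
          from funext fun ω => (hexpp ω).symm]
      rw [← hbsump]
      exact lep
    have := aux_markov hint hle c0
    rw [show b0 - c0 = -Real.log (2 / ε) by rw [hc0]; ring] at this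
    rw [Real.exp_neg, Real.exp_log (by positivity), inv_div] at this
    exact this
  have hPm : P {ω | c0 ≤ gm ω} ≤ ENNReal.ofReal (ε / 2) := by
    have hint : Integrable (fun ω => Real.exp (gm ω)) P :=
      intm.congr (Eventually.of_forall fun ω => (hexpm ω))
    have hle : ∫ ω, Real.exp (gm ω) ∂P ≤ Real.exp b0 := by
      rw [show (fun ω => Real.exp (gm ω))
          = fun ω => ∏ i ∈ Finset.Icc 1 t, Real.exp ((-1:ℝ) * φ (l i * (X i ω - mm)))
          from funext fun ω => (hexpm ω).symm]
      rw [← hbsumm]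
      exact lem1
    have := aux_markov hint hle c0
    rw [show b0 - c0 = -Real.log (2 / ε) by rw [hc0]; ring] at this
    rw [Real.exp_neg, Real.exp_log (by positivity), inv_div] at this
    exact this
  -- measurability of the bad events
  have hfmeas : ∀ m : ℝ,
      Measurable (fun ω => ∑ i ∈ Finset.Icc 1 t, φ (l i * (X i ω - m))) := fun m =>
    Finset.measurable_sum _ fun i _ => hφ_meas.comp
      ((((hX_adapted i).mono (ℱ.le i) le_rfl).sub measurable_const).const_mul (l i))
  have hbadp_meas : MeasurableSet {ω | c0 ≤ fp ω} :=
    measurableSet_le measurable_const (hfmeas mp)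
  have hbadm_meas : MeasurableSet {ω | c0 ≤ gm ω} := by
    have hgmeq : gm = fun ω => -(∑ i ∈ Finset.Icc 1 t, φ (l i * (X i ω - mm))) := by
      funext ω; rw [hgm]; exact Finset.sum_neg_distrib (fun i => φ (l i * (X i ω - mm)))
    have : Measurable gm := by rw [hgmeq]; exact (hfmeas mm).neg
    exact measurableSet_le measurable_const this
  -- the good event
  set G : Set Ω := ({ω | c0 ≤ fp ω} ∪ {ω | c0 ≤ gm ω})ᶜ with hG
  have hPG : ENNReal.ofReal (1 - ε) ≤ P G := by
    have hPu : P ({ω | c0 ≤ fp ω} ∪ {ω | c0 ≤ gm ω}) ≤ ENNReal.ofReal ε := by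
      refine (measure_union_le _ _).trans ((add_le_add hPp hPm).trans ?_)
      rw [← ENNReal.ofReal_add (by linarith) (by linarith)]
      norm_num
    rw [hG, measure_compl (hbadp_meas.union hbadm_meas) (measure_ne_top P _)]
    have h1 : ENNReal.ofReal (1 - ε) = 1 - ENNReal.ofReal ε := by
      rw [ENNReal.ofReal_sub 1 hε0.le, ENNReal.ofReal_one]
    rw [h1, measure_univ]
    exact tsub_le_tsub_left hPu 1
  refine le_trans hPG (measure_mono ?_)
  -- inclusion of the good event in the target event
  intro ω hω
  rw [hG, Set.mem_compl_iff, Set.mem_union] at hω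
  push_neg at hω
  obtain ⟨hwp, hwm⟩ := hω
  rw [Set.mem_setOf_eq, not_le] at hwp hwm
  -- on the good event: fp ω < c0 = -(V/2) - log(2/α) and ∑ φ(·−mm) > V/2 + log(2/α)
  have hlow : V / 2 + Real.log (2 / α) < ∑ i ∈ Finset.Icc 1 t, φ (l i * (X i ω - mm)) := by
    rw [hgm] at hwm
    beta_reduce at hwm
    rw [Finset.sum_neg_distrib, hc0val] at hwm
    linarith
  have hhigh : (∑ i ∈ Finset.Icc 1 t, φ (l i * (X i ω - mp)))
      < -(V / 2) - Real.log (2 / α) := by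
    rw [hc0val] at hwp
    exact hwp
  -- monotonicity of the sum in m
  have hmono : ∀ m m' : ℝ, m ≤ m' →
      (∑ i ∈ Finset.Icc 1 t, φ (l i * (X i ω - m')))
        ≤ ∑ i ∈ Finset.Icc 1 t, φ (l i * (X i ω - m)) := by
    intro m m' hmm
    refine Finset.sum_le_sum fun i hi => hφ_mono ?_
    have hli := hl_pos i (Finset.mem_Icc.1 hi).1
    nlinarith
  set Sω : Set ℝ := {m : ℝ |
      -(V / 2) - Real.log (2 / α) ≤ (∑ i ∈ Finset.Icc 1 t, φ (l i * (X i ω - m))) ∧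
      (∑ i ∈ Finset.Icc 1 t, φ (l i * (X i ω - m))) ≤ V / 2 + Real.log (2 / α)} with hSω
  have claimU : ∀ m ∈ Sω, m ≤ mp := by
    intro m hm
    by_contra hc
    push_neg at hc
    have h1 := hmono mp m hc.le
    have h2 := hm.1
    linarith
  have claimL : ∀ m ∈ Sω, mm ≤ m := by
    intro m hm
    by_contra hc
    push_neg at hc
    have h1 := hmono m mm hc.le
    have h2 := hm.2
    linarith
  show sSup Sω - sInf Sω ≤ 4 * D / L
  by_cases hne : Sω.Nonempty
  · have h1 : sSup Sω ≤ mp := csSup_le hne claimU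
    have h2 : mm ≤ sInf Sω := le_csInf hne claimL
    have h3 : sSup Sω - sInf Sω ≤ mp - mm := by linarith
    refine h3.trans ?_
    have h4 : mp - mm = 2 * y := by rw [hmp, hmm]; ring
    rw [h4]
    have h5 : 4 * D / L = 2 * (2 * D / L) := by ring
    linarith
  · rw [Set.not_nonempty_iff_eq_empty] at hne
    rw [hne, Real.sSup_empty, Real.sInf_empty, sub_zero]
    exact div_nonneg (by linarith) hLpos.le
end

section
/- Let {X_t}_{t∈ℕ⁺} be adapted to {F_t} with E[X_t | F_{t−1}] ≤ μ and E[(X_t − μ)² | F_{t−1}] ≤ σ² almost surely for all t ∈ ℕ⁺, let {λ_t}_{t∈ℕ⁺} be a predictable nonnegative process, let φ be a Catoni-type influence function, and let α ∈ (0,1). Define the one-sided sets CI_t^{C+} = { m ∈ ℝ : Σ_{i=1}^t φ(λ_i(X_i − m)) ≤ σ²(Σ_{i=1}^t λ_i²)/2 + log(1/α) }. Then P(∀ t ∈ ℕ⁺, μ ∈ CI_t^{C+}) ≥ 1 − α. -/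
open MeasureTheory ProbabilityTheory Filter Finset
open scoped NNReal ENNReal

namespace CatoniAux

theorem supermart_maximal {Ω : Type*} {m0 : MeasurableSpace Ω} {P : Measure Ω}
    [IsFiniteMeasure P] {𝒢 : Filtration ℕ m0} {f : ℕ → Ω → ℝ}
    (hsup : Supermartingale f 𝒢 P) (hnonneg : ∀ i ω, 0 ≤ f i ω) {ε : ℝ≥0} (n : ℕ) :
    ε • P {ω | (ε : ℝ) ≤ (range (n + 1)).sup' nonempty_range_add_one fun k => f k ω} ≤
      ENNReal.ofReal (∫ ω, f 0 ω ∂P) := by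
  set τ : Ω → WithTop ℕ := fun ω ↦ (hittingBtwn f {y : ℝ | (ε : ℝ) ≤ y} 0 n ω : ℕ) with hτdef
  have hτ : IsStoppingTime 𝒢 τ :=
    hsup.stronglyAdapted.adapted.isStoppingTime_hittingBtwn measurableSet_Ici
  have hτle : ∀ ω, τ ω ≤ n := fun ω => WithTop.coe_le_coe.2 (hittingBtwn_le ω)
  have hsub : Submartingale (-f) 𝒢 P := hsup.neg
  have hint_neg : Integrable (stoppedValue (-f) τ) P :=
    hsub.integrable_stoppedValue hτ hτle
  have hint : Integrable (stoppedValue f τ) P := by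
    have : stoppedValue f τ = -(stoppedValue (-f) τ) := by
      funext ω; simp [stoppedValue]
    rw [this]; exact hint_neg.neg
  -- optional stopping : ∫ stoppedValue f τ ≤ ∫ f 0
  have hOS : ∫ ω, stoppedValue f τ ω ∂P ≤ ∫ ω, f 0 ω ∂P := by
    have h0 : IsStoppingTime 𝒢 (fun _ : Ω => (0 : ℕ)) := isStoppingTime_const _ 0
    have := hsub.expected_stoppedValue_mono h0 hτ (fun ω => WithTop.coe_le_coe.2 (Nat.zero_le _)) hτle
    have hv0 : stoppedValue (-f) (fun _ : Ω => (0 : ℕ)) = fun ω => -(f 0 ω) := by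
      funext ω; simp [stoppedValue]
    have hvτ : stoppedValue (-f) τ = fun ω => -(stoppedValue f τ ω) := by
      funext ω; simp [stoppedValue]
    rw [hv0, hvτ, integral_neg, integral_neg, neg_le_neg_iff] at this
    exact this
  have hn : Set.Icc 0 n = {k | k ≤ n} := by ext x; simp
  have hmem : ∀ ω, ((ε : ℝ) ≤ (range (n + 1)).sup' nonempty_range_add_one fun k => f k ω) →
      (ε : ℝ) ≤ stoppedValue f τ ω := by
    intro x hx
    simp_rw [le_sup'_iff, mem_range, Nat.lt_succ_iff] at hx
    refine stoppedValue_hittingBtwn_mem ?_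
    simp only [Set.mem_setOf_eq, exists_prop, hn]
    exact let ⟨j, hj₁, hj₂⟩ := hx; ⟨j, hj₁, hj₂⟩
  have hmeas : MeasurableSet {ω | (ε : ℝ) ≤ (range (n + 1)).sup' nonempty_range_add_one
      fun k => f k ω} :=
    measurableSet_le measurable_const
      (Finset.measurable_range_sup'' fun k _ =>
        (hsup.stronglyMeasurable k).measurable.le (𝒢.le k))
  have h := setIntegral_ge_of_const_le_real hmeas (measure_ne_top _ _) hmem hint.integrableOn
  have h2 : ∫ ω in {ω | (ε : ℝ) ≤ (range (n + 1)).sup' nonempty_range_add_one fun k => f k ω},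
      stoppedValue f τ ω ∂P ≤ ∫ ω, stoppedValue f τ ω ∂P := by
    refine setIntegral_le_integral hint ?_
    filter_upwards with ω
    simp only [Pi.zero_apply, stoppedValue]
    exact hnonneg _ _
  rw [ENNReal.le_ofReal_iff_toReal_le, ENNReal.toReal_smul]
  · exact le_trans h (le_trans h2 hOS)
  · exact ENNReal.mul_ne_top (by simp) (measure_ne_top _ _)
  · exact le_trans (mul_nonneg ε.coe_nonneg ENNReal.toReal_nonneg)
      (le_trans h (le_trans h2 hOS))



theorem lintegral_mul_le_of_le_on_base {Ω : Type*} {m m0 : MeasurableSpace Ω} (hm : m ≤ m0)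
    (P : Measure Ω) {g : Ω → ℝ≥0∞} (hg : Measurable g)
    (h : ∀ A : Set Ω, MeasurableSet[m] A → ∫⁻ ω in A, g ω ∂P ≤ P A)
    {W : Ω → ℝ≥0∞} (hW : Measurable[m] W) :
    ∫⁻ ω, W ω * g ω ∂P ≤ ∫⁻ ω, W ω ∂P := by
  set ν : Measure Ω := P.withDensity g with hν
  have hWm0 : Measurable W := hW.mono hm le_rfl
  have h1 : ∫⁻ ω, W ω * g ω ∂P = ∫⁻ ω, W ω ∂ν := by
    rw [hν, lintegral_withDensity_eq_lintegral_mul _ hg hWm0]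
    simp only [Pi.mul_apply, mul_comm]
  have h2 : ∫⁻ ω, W ω ∂ν = ∫⁻ ω, W ω ∂(ν.trim hm) := (lintegral_trim hm hW).symm
  have h3 : ν.trim hm ≤ P.trim hm := by
    refine Measure.le_iff.2 fun s hs => ?_
    rw [trim_measurableSet_eq hm hs, trim_measurableSet_eq hm hs, hν,
      withDensity_apply _ (hm s hs)]
    exact h s hs
  have h4 : ∫⁻ ω, W ω ∂(ν.trim hm) ≤ ∫⁻ ω, W ω ∂(P.trim hm) := lintegral_mono' h3 le_rfl
  have h5 : ∫⁻ ω, W ω ∂(P.trim hm) = ∫⁻ ω, W ω ∂P := lintegral_trim hm hW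
  rw [h1, h2, ← h5]; exact h4



theorem condexp_le_one_of_setIntegral_le {Ω : Type*} {m m0 : MeasurableSpace Ω} (hm : m ≤ m0)
    {P : Measure Ω} [IsProbabilityMeasure P] {g : Ω → ℝ} (hgi : Integrable g P)
    (h : ∀ A : Set Ω, MeasurableSet[m] A → ∫ ω in A, g ω ∂P ≤ (P A).toReal) :
    P[g|m] ≤ᵐ[P] fun _ => (1 : ℝ) := by
  haveI : IsFiniteMeasure (P.trim hm) := isFiniteMeasure_trim hm
  have hce_m : StronglyMeasurable[m] (P[g|m]) := stronglyMeasurable_condExp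
  have hce_int : Integrable (P[g|m]) P := integrable_condExp
  have hce_trim : Integrable (P[g|m]) (P.trim hm) := hce_int.trim hm hce_m
  have hone : Integrable (fun _ : Ω => (1 : ℝ)) (P.trim hm) := integrable_const _
  refine ae_le_of_ae_le_trim (hm := hm) ?_
  refine ae_le_of_forall_setIntegral_le hce_trim hone fun s hs _ => ?_
  have e1 : ∫ ω in s, (P[g|m]) ω ∂(P.trim hm) = ∫ ω in s, (P[g|m]) ω ∂P :=
    (setIntegral_trim hm hce_m hs).symm
  have e2 : ∫ ω in s, (P[g|m]) ω ∂P = ∫ ω in s, g ω ∂P := setIntegral_condExp hm hgi hs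
  have e3 : ∫ ω in s, (fun _ : Ω => (1 : ℝ)) ω ∂(P.trim hm) = ((P.trim hm) s).toReal := by
    simp [Measure.restrict_apply_univ, Measure.real]
  rw [e1, e2, e3, trim_measurableSet_eq hm hs]
  exact h s hs



theorem catoni_step {Ω : Type*} {m m0 : MeasurableSpace Ω} (hm : m ≤ m0)
    {P : Measure Ω} [IsProbabilityMeasure P]
    {φ : ℝ → ℝ} (hφ_ub : ∀ x : ℝ, φ x ≤ Real.log (1 + x + x ^ 2 / 2)) (hφm : Measurable φ)
    {Z L : Ω → ℝ} {σ2 : ℝ} (hσ2 : 0 ≤ σ2)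
    (hL : StronglyMeasurable[m] L) (hL0 : ∀ ω, 0 ≤ L ω)
    (hZm : Measurable Z) (hZ : MemLp Z 2 P)
    (hmean : P[Z|m] ≤ᵐ[P] fun _ => (0 : ℝ))
    (hvar : P[fun ω => Z ω ^ 2|m] ≤ᵐ[P] fun _ => σ2) :
    Integrable (fun ω => Real.exp (φ (L ω * Z ω) - σ2 * L ω ^ 2 / 2)) P ∧
      ∀ A : Set Ω, MeasurableSet[m] A →
        ∫ ω in A, Real.exp (φ (L ω * Z ω) - σ2 * L ω ^ 2 / 2) ∂P ≤ (P A).toReal := by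
  set g : Ω → ℝ := fun ω => Real.exp (φ (L ω * Z ω) - σ2 * L ω ^ 2 / 2) with hgdef
  have hLm0 : Measurable L := (hL.mono hm).measurable
  have hgm : Measurable g := by
    apply Real.measurable_exp.comp
    exact (hφm.comp (hLm0.mul hZm)).sub ((measurable_const.mul (hLm0.pow_const 2)).div_const 2)
  have hg0 : ∀ ω, 0 ≤ g ω := fun ω => (Real.exp_pos _).le
  have hZ1 : Integrable Z P := hZ.integrable one_le_two
  have hZ2 : Integrable (fun ω => Z ω ^ 2) P := hZ.integrable_sq
  have hq : ∀ y : ℝ, 0 < 1 + y + y ^ 2 / 2 := fun y => by nlinarith [sq_nonneg (y + 1)]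
  have hexpφ : ∀ y : ℝ, Real.exp (φ y) ≤ 1 + y + y ^ 2 / 2 := fun y =>
    le_trans (Real.exp_le_exp.2 (hφ_ub y)) (le_of_eq (Real.exp_log (hq y)))
  set H : Ω → ℝ := fun ω =>
    Real.exp (-(σ2 * L ω ^ 2 / 2)) * (1 + L ω * Z ω + (L ω * Z ω) ^ 2 / 2) with hHdef
  have hgH : ∀ ω, g ω ≤ H ω := by
    intro ω
    have : g ω = Real.exp (-(σ2 * L ω ^ 2 / 2)) * Real.exp (φ (L ω * Z ω)) := by
      rw [hgdef]; simp only []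
      rw [sub_eq_add_neg, Real.exp_add, mul_comm]
    rw [this, hHdef]
    exact mul_le_mul_of_nonneg_left (hexpφ _) (Real.exp_pos _).le
  have hH0 : ∀ ω, 0 ≤ H ω := fun ω =>
    mul_nonneg (Real.exp_pos _).le (hq _).le
  -- the truncation sets
  set B : ℕ → Set Ω := fun N => {ω | L ω ≤ (N : ℝ)} with hBdef
  have hBmeas : ∀ N, MeasurableSet[m] (B N) := fun N =>
    measurableSet_le hL.measurable measurable_const
  have hBmono : Monotone B := by
    intro i j hij ω hω
    simp only [hBdef, Set.mem_setOf_eq] at hω ⊢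
    exact le_trans hω (Nat.cast_le.2 hij)
  -- the bound function on B N
  have hbnd_int : ∀ N : ℕ, Integrable
      (fun ω => 1 + (N : ℝ) * |Z ω| + (N : ℝ) ^ 2 * Z ω ^ 2 / 2) P := by
    intro N
    exact ((integrable_const 1).add (hZ1.abs.const_mul _)).add ((hZ2.const_mul _).div_const 2)
  have hHbnd : ∀ N : ℕ, ∀ ω ∈ B N, H ω ≤ 1 + (N : ℝ) * |Z ω| + (N : ℝ) ^ 2 * Z ω ^ 2 / 2 := by
    intro N ω hω
    have hLN : L ω ≤ (N : ℝ) := hω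
    have h1 : Real.exp (-(σ2 * L ω ^ 2 / 2)) ≤ 1 := by
      rw [Real.exp_le_one_iff, neg_nonpos]
      positivity
    have h2 : 1 + L ω * Z ω + (L ω * Z ω) ^ 2 / 2 ≤
        1 + (N : ℝ) * |Z ω| + (N : ℝ) ^ 2 * Z ω ^ 2 / 2 := by
      have ha : L ω * Z ω ≤ (N : ℝ) * |Z ω| := by
        calc L ω * Z ω ≤ |L ω * Z ω| := le_abs_self _
        _ = L ω * |Z ω| := by rw [abs_mul, abs_of_nonneg (hL0 ω)]
        _ ≤ (N : ℝ) * |Z ω| := mul_le_mul_of_nonneg_right hLN (abs_nonneg _)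
      have hb : (L ω * Z ω) ^ 2 ≤ (N : ℝ) ^ 2 * Z ω ^ 2 := by
        rw [mul_pow]
        exact mul_le_mul_of_nonneg_right
          (pow_le_pow_left₀ (hL0 ω) hLN 2) (sq_nonneg _)
      linarith
    calc H ω ≤ 1 * (1 + L ω * Z ω + (L ω * Z ω) ^ 2 / 2) :=
          mul_le_mul_of_nonneg_right h1 (hq _).le
    _ = 1 + L ω * Z ω + (L ω * Z ω) ^ 2 / 2 := one_mul _
    _ ≤ _ := h2
  haveI hfin : IsFiniteMeasure (P.trim hm) := isFiniteMeasure_trim hm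
  have hIntOn : ∀ (f : Ω → ℝ), Measurable f → (∀ ω, 0 ≤ f ω) →
      (∀ (N : ℕ) ω, ω ∈ B N → f ω ≤ 1 + (N : ℝ) * |Z ω| + (N : ℝ) ^ 2 * Z ω ^ 2 / 2) →
      ∀ (A : Set Ω), MeasurableSet[m] A → ∀ N : ℕ, IntegrableOn f (A ∩ B N) P := by
    intro f hf hf0 hfb A hA N
    refine Integrable.mono' ((hbnd_int N).integrableOn)
      hf.aestronglyMeasurable.restrict ?_
    filter_upwards [ae_restrict_mem (hm _ (hA.inter (hBmeas N)))] with ω hω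
    rw [Real.norm_eq_abs, abs_of_nonneg (hf0 ω)]
    exact hfb N ω hω.2
  have hgB : ∀ (N : ℕ) ω, ω ∈ B N →
      g ω ≤ 1 + (N : ℝ) * |Z ω| + (N : ℝ) ^ 2 * Z ω ^ 2 / 2 := fun N ω hω =>
    le_trans (hgH ω) (hHbnd N ω hω)
  have hHm : Measurable H := by
    apply Measurable.mul
    · exact Real.measurable_exp.comp ((measurable_const.mul (hLm0.pow_const 2)).div_const 2).neg
    · exact (measurable_const.add (hLm0.mul hZm)).add (((hLm0.mul hZm).pow_const 2).div_const 2)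
  have hgiOn := hIntOn g hgm hg0 hgB
  have hHiOn := hIntOn H hHm hH0 hHbnd
  -- key truncated bound
  have key : ∀ (A : Set Ω), MeasurableSet[m] A → ∀ N : ℕ,
      ∫ ω in A ∩ B N, g ω ∂P ≤ (P (A ∩ B N)).toReal := by
    intro A hA N
    set S := A ∩ B N with hSdef
    have hSm : MeasurableSet[m] S := hA.inter (hBmeas N)
    have hSm0 : MeasurableSet S := hm _ hSm
    set c : Ω → ℝ := fun ω => Real.exp (-(σ2 * L ω ^ 2 / 2)) with hcdef
    have hc0 : ∀ ω, 0 ≤ c ω := fun ω => (Real.exp_pos _).le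
    have hc1 : ∀ ω, c ω ≤ 1 := by
      intro ω
      rw [hcdef]
      simp only []
      rw [Real.exp_le_one_iff, neg_nonpos]
      positivity
    have hcm : StronglyMeasurable[m] c := by
      have : Measurable[m] c :=
        Real.measurable_exp.comp
          ((measurable_const.mul ((hL.measurable.pow_const 2))).div_const 2).neg
      exact this.stronglyMeasurable
    set u0 : Ω → ℝ := S.indicator c with hu0def
    set u1 : Ω → ℝ := S.indicator (fun ω => c ω * L ω) with hu1def
    set u2 : Ω → ℝ := S.indicator (fun ω => c ω * (L ω ^ 2 / 2)) with hu2def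
    have hu0m : StronglyMeasurable[m] u0 := hcm.indicator hSm
    have hu1m : StronglyMeasurable[m] u1 := (hcm.mul hL).indicator hSm
    have hu2m : StronglyMeasurable[m] u2 := by
      have : Measurable[m] (fun ω => c ω * (L ω ^ 2 / 2)) :=
        hcm.measurable.mul ((hL.measurable.pow_const 2).div_const 2)
      exact this.stronglyMeasurable.indicator hSm
    have hu0m0 : Measurable u0 := (hu0m.mono hm).measurable
    have hu1m0 : Measurable u1 := (hu1m.mono hm).measurable
    have hu2m0 : Measurable u2 := (hu2m.mono hm).measurable
    have hu0_nonneg : ∀ ω, 0 ≤ u0 ω := fun ω => Set.indicator_nonneg (fun ω _ => hc0 ω) ω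
    have hu1_nonneg : ∀ ω, 0 ≤ u1 ω := fun ω =>
      Set.indicator_nonneg (fun ω _ => mul_nonneg (hc0 ω) (hL0 ω)) ω
    have hu2_nonneg : ∀ ω, 0 ≤ u2 ω := fun ω =>
      Set.indicator_nonneg (fun ω _ => mul_nonneg (hc0 ω) (by positivity)) ω
    have hu1_le : ∀ ω, u1 ω ≤ (N : ℝ) := by
      intro ω
      rw [hu1def]
      by_cases hω : ω ∈ S
      · rw [Set.indicator_of_mem hω]
        calc c ω * L ω ≤ 1 * L ω := mul_le_mul_of_nonneg_right (hc1 ω) (hL0 ω)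
        _ = L ω := one_mul _
        _ ≤ (N : ℝ) := hω.2
      · rw [Set.indicator_of_notMem hω]; positivity
    have hu2_le : ∀ ω, u2 ω ≤ (N : ℝ) ^ 2 / 2 := by
      intro ω
      rw [hu2def]
      by_cases hω : ω ∈ S
      · rw [Set.indicator_of_mem hω]
        have hLN : L ω ≤ (N : ℝ) := hω.2
        have : L ω ^ 2 ≤ (N : ℝ) ^ 2 := pow_le_pow_left₀ (hL0 ω) hLN 2
        calc c ω * (L ω ^ 2 / 2) ≤ 1 * (L ω ^ 2 / 2) :=
              mul_le_mul_of_nonneg_right (hc1 ω) (by positivity)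
        _ = L ω ^ 2 / 2 := one_mul _
        _ ≤ (N : ℝ) ^ 2 / 2 := by linarith
      · rw [Set.indicator_of_notMem hω]; positivity
    -- integrabilities
    have hu0_int : Integrable u0 P := by
      refine Integrable.mono' (integrable_const (1 : ℝ)) hu0m0.aestronglyMeasurable ?_
      filter_upwards with ω
      rw [Real.norm_eq_abs, abs_of_nonneg (hu0_nonneg ω)]
      exact Set.indicator_le_self' (fun ω _ => hc0 ω) ω |>.trans (hc1 ω) |>.trans le_rfl
    have hu1Z_int : Integrable (u1 * Z) P := by
      refine Integrable.mono' (hZ1.abs.const_mul (N : ℝ)) (hu1m0.mul hZm).aestronglyMeasurable ?_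
      filter_upwards with ω
      rw [Pi.mul_apply, Real.norm_eq_abs, abs_mul, abs_of_nonneg (hu1_nonneg ω)]
      exact mul_le_mul_of_nonneg_right (hu1_le ω) (abs_nonneg _)
    have hu2Z2_int : Integrable (u2 * fun ω => Z ω ^ 2) P := by
      refine Integrable.mono' ((hZ2.const_mul ((N : ℝ) ^ 2 / 2))) 
        (hu2m0.mul (hZm.pow_const 2)).aestronglyMeasurable ?_
      filter_upwards with ω
      rw [Pi.mul_apply, Real.norm_eq_abs, abs_mul, abs_of_nonneg (hu2_nonneg ω),
        abs_of_nonneg (sq_nonneg _)]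
      exact mul_le_mul_of_nonneg_right (hu2_le ω) (sq_nonneg _)
    have hu2σ_int : Integrable (fun ω => u2 ω * σ2) P := by
      refine Integrable.mono' (integrable_const ((N : ℝ) ^ 2 / 2 * σ2))
        (hu2m0.mul_const σ2).aestronglyMeasurable ?_
      filter_upwards with ω
      rw [Real.norm_eq_abs, abs_of_nonneg (mul_nonneg (hu2_nonneg ω) hσ2)]
      exact mul_le_mul_of_nonneg_right (hu2_le ω) hσ2
    -- decomposition of the indicator of H
    have hdecomp : S.indicator H = fun ω => u0 ω + u1 ω * Z ω + u2 ω * Z ω ^ 2 := by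
      funext ω
      rw [hu0def, hu1def, hu2def]
      by_cases hω : ω ∈ S
      · rw [Set.indicator_of_mem hω, Set.indicator_of_mem hω, Set.indicator_of_mem hω,
          Set.indicator_of_mem hω, hHdef]
        ring
      · rw [Set.indicator_of_notMem hω, Set.indicator_of_notMem hω,
          Set.indicator_of_notMem hω, Set.indicator_of_notMem hω]
        ring
    -- step 1 : ∫_S g ≤ ∫_S H
    have step1 : ∫ ω in S, g ω ∂P ≤ ∫ ω in S, H ω ∂P :=
      setIntegral_mono_on (hgiOn A hA N) (hHiOn A hA N) hSm0 fun ω _ => hgH ω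
    -- step 2 : split the integral
    have step2 : ∫ ω in S, H ω ∂P =
        (∫ ω, u0 ω ∂P) + (∫ ω, u1 ω * Z ω ∂P) + ∫ ω, u2 ω * Z ω ^ 2 ∂P := by
      rw [← integral_indicator hSm0, hdecomp]
      have e1 := integral_add (μ := P) (hu0_int.add hu1Z_int) hu2Z2_int
      have e2 := integral_add (μ := P) hu0_int hu1Z_int
      simp only [Pi.add_apply, Pi.mul_apply] at e1 e2
      rw [← e2, ← e1]
    -- step 3 : middle term is nonpositive
    have step3 : ∫ ω, u1 ω * Z ω ∂P ≤ 0 := by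
      have hmul : P[u1 * Z|m] =ᵐ[P] u1 * P[Z|m] :=
        condExp_mul_of_stronglyMeasurable_left hu1m hu1Z_int hZ1
      calc ∫ ω, u1 ω * Z ω ∂P = ∫ ω, (u1 * Z) ω ∂P := rfl
      _ = ∫ ω, (P[u1 * Z|m]) ω ∂P := (integral_condExp hm).symm
      _ = ∫ ω, (u1 * P[Z|m]) ω ∂P := integral_congr_ae hmul
      _ ≤ 0 := by
          refine integral_nonpos_of_ae ?_
          filter_upwards [hmean] with ω hω
          exact mul_nonpos_of_nonneg_of_nonpos (hu1_nonneg ω) hω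
    -- step 4 : last term bounded by variance
    have step4 : ∫ ω, u2 ω * Z ω ^ 2 ∂P ≤ ∫ ω, u2 ω * σ2 ∂P := by
      have hmul : P[u2 * fun ω => Z ω ^ 2|m] =ᵐ[P] u2 * P[fun ω => Z ω ^ 2|m] :=
        condExp_mul_of_stronglyMeasurable_left hu2m hu2Z2_int hZ2
      calc ∫ ω, u2 ω * Z ω ^ 2 ∂P = ∫ ω, (u2 * fun ω => Z ω ^ 2) ω ∂P := rfl
      _ = ∫ ω, (P[u2 * fun ω => Z ω ^ 2|m]) ω ∂P := (integral_condExp hm).symm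
      _ = ∫ ω, (u2 * P[fun ω => Z ω ^ 2|m]) ω ∂P := integral_congr_ae hmul
      _ ≤ ∫ ω, u2 ω * σ2 ∂P := by
          refine integral_mono_ae (integrable_condExp.congr hmul) hu2σ_int ?_
          filter_upwards [hvar] with ω hω
          exact mul_le_mul_of_nonneg_left hω (hu2_nonneg ω)
    -- step 5 : remaining terms bounded by the measure of S
    have step5 : (∫ ω, u0 ω ∂P) + ∫ ω, u2 ω * σ2 ∂P ≤ (P S).toReal := by
      rw [← integral_add hu0_int hu2σ_int]
      have hptwise : ∀ ω, u0 ω + u2 ω * σ2 ≤ S.indicator (fun _ => (1 : ℝ)) ω := by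
        intro ω
        rw [hu0def, hu2def]
        by_cases hω : ω ∈ S
        · rw [Set.indicator_of_mem hω, Set.indicator_of_mem hω, Set.indicator_of_mem hω]
          have hx : 0 ≤ σ2 * L ω ^ 2 / 2 := by positivity
          have h1x : 1 + σ2 * L ω ^ 2 / 2 ≤ Real.exp (σ2 * L ω ^ 2 / 2) := by
            have := Real.add_one_le_exp (σ2 * L ω ^ 2 / 2)
            linarith
          have : c ω + c ω * (L ω ^ 2 / 2) * σ2 = c ω * (1 + σ2 * L ω ^ 2 / 2) := by ring
          rw [this, hcdef]
          simp only []
          rw [Real.exp_neg]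
          rw [inv_mul_le_iff₀ (Real.exp_pos _), mul_one]
          exact h1x
        · rw [Set.indicator_of_notMem hω, Set.indicator_of_notMem hω,
            Set.indicator_of_notMem hω]
          simp
      have hind_int : Integrable (S.indicator fun _ => (1 : ℝ)) P :=
        (integrable_const (1 : ℝ)).indicator hSm0
      calc ∫ ω, (u0 ω + u2 ω * σ2) ∂P ≤ ∫ ω, S.indicator (fun _ => (1 : ℝ)) ω ∂P :=
            integral_mono (hu0_int.add hu2σ_int) hind_int hptwise
      _ = (P S).toReal := by
          rw [integral_indicator hSm0]
          simp [Measure.real]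
    calc ∫ ω in S, g ω ∂P ≤ ∫ ω in S, H ω ∂P := step1
    _ = (∫ ω, u0 ω ∂P) + (∫ ω, u1 ω * Z ω ∂P) + ∫ ω, u2 ω * Z ω ^ 2 ∂P := step2
    _ ≤ (∫ ω, u0 ω ∂P) + 0 + ∫ ω, u2 ω * σ2 ∂P := by linarith [step3, step4]
    _ = (∫ ω, u0 ω ∂P) + ∫ ω, u2 ω * σ2 ∂P := by ring
    _ ≤ (P S).toReal := step5
  -- lintegral version on arbitrary m-measurable sets
  have keyL : ∀ A : Set Ω, MeasurableSet[m] A → ∫⁻ ω in A, ENNReal.ofReal (g ω) ∂P ≤ P A := by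
    intro A hA
    set ν : Measure Ω := P.withDensity (fun ω => ENNReal.ofReal (g ω)) with hνdef
    have hAm0 : MeasurableSet A := hm _ hA
    have hU : A = ⋃ N : ℕ, A ∩ B N := by
      ext ω
      constructor
      · intro hω
        obtain ⟨N, hN⟩ := exists_nat_ge (L ω)
        exact Set.mem_iUnion.2 ⟨N, hω, hN⟩
      · intro hω
        obtain ⟨N, hN⟩ := Set.mem_iUnion.1 hω
        exact hN.1
    have hdir : Directed (· ⊆ ·) (fun N : ℕ => A ∩ B N) :=
      Monotone.directed_le fun i j hij => Set.inter_subset_inter_right _ (hBmono hij)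
    have hcalc : ∫⁻ ω in A, ENNReal.ofReal (g ω) ∂P = ν A :=
      (withDensity_apply _ hAm0).symm
    rw [hcalc]
    have hν2 : ν A = ⨆ N, ν (A ∩ B N) := by
      conv_lhs => rw [hU]
      exact Directed.measure_iUnion hdir
    rw [hν2]
    refine iSup_le fun N => ?_
    have hSm0 : MeasurableSet (A ∩ B N) := hm _ (hA.inter (hBmeas N))
    rw [hνdef, withDensity_apply _ hSm0]
    have hInt : IntegrableOn g (A ∩ B N) P := hgiOn A hA N
    have heq : ∫⁻ ω in A ∩ B N, ENNReal.ofReal (g ω) ∂P =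
        ENNReal.ofReal (∫ ω in A ∩ B N, g ω ∂P) :=
      (ofReal_integral_eq_lintegral_ofReal hInt
        (Filter.Eventually.of_forall fun ω => hg0 ω)).symm
    rw [heq]
    calc ENNReal.ofReal (∫ ω in A ∩ B N, g ω ∂P)
        ≤ ENNReal.ofReal ((P (A ∩ B N)).toReal) := ENNReal.ofReal_le_ofReal (key A hA N)
    _ = P (A ∩ B N) := ENNReal.ofReal_toReal (measure_ne_top _ _)
    _ ≤ P A := measure_mono Set.inter_subset_left
  have hg_int : Integrable g P := by
    refine ⟨hgm.aestronglyMeasurable, ?_⟩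
    rw [hasFiniteIntegral_iff_ofReal (Filter.Eventually.of_forall hg0)]
    calc ∫⁻ ω, ENNReal.ofReal (g ω) ∂P = ∫⁻ ω in Set.univ, ENNReal.ofReal (g ω) ∂P := by
          rw [Measure.restrict_univ]
    _ ≤ P Set.univ := keyL Set.univ MeasurableSet.univ
    _ < ⊤ := measure_lt_top _ _
  refine ⟨hg_int, fun A hA => ?_⟩
  have h1 : ENNReal.ofReal (∫ ω in A, g ω ∂P) ≤ P A := by
    rw [ofReal_integral_eq_lintegral_ofReal hg_int.integrableOn
      (Filter.Eventually.of_forall fun ω => hg0 ω)]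
    exact keyL A hA
  have h2 : 0 ≤ ∫ ω in A, g ω ∂P := setIntegral_nonneg (hm _ hA) fun ω _ => hg0 ω
  calc ∫ ω in A, g ω ∂P = (ENNReal.ofReal (∫ ω in A, g ω ∂P)).toReal :=
        (ENNReal.toReal_ofReal h2).symm
  _ ≤ (P A).toReal := ENNReal.toReal_mono (measure_ne_top _ _) h1

end CatoniAux

/-- **One-sided Catoni-style confidence sequence under an inexact null.** If the
conditional means are bounded above by `μ` and the conditional variances by `σ²`, then
for any nonnegative predictable `l` and Catoni-type influence function `φ`, the
one-sided sets `CI_t^{C+} = {m : ∑ φ(l_i (X_i - m)) ≤ σ²(∑ l_i²)/2 + log(1/α)}`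
form a `(1-α)`-confidence sequence for `μ`. -/
theorem one_sided_catoni_confidence_sequence
    {Ω : Type*} {mΩ : MeasurableSpace Ω} {P : Measure Ω} [IsProbabilityMeasure P]
    (ℱ : Filtration ℕ mΩ) (X l : ℕ → Ω → ℝ) (μ σ α : ℝ) (φ : ℝ → ℝ)
    (hα : α ∈ Set.Ioo (0 : ℝ) 1)
    (hφ_mono : Monotone φ)
    (hφ_lb : ∀ x : ℝ, -Real.log (1 - x + x ^ 2 / 2) ≤ φ x)
    (hφ_ub : ∀ x : ℝ, φ x ≤ Real.log (1 + x + x ^ 2 / 2))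
    (hX_adapted : StronglyAdapted ℱ X)
    (hX_sq : ∀ t, 1 ≤ t → MemLp (X t) 2 P)
    (hmean : ∀ t, 1 ≤ t → ∀ᵐ ω ∂P, (P[X t | ℱ (t - 1)]) ω ≤ μ)
    (hvar : ∀ t, 1 ≤ t →
      ∀ᵐ ω ∂P, (P[fun ω' => (X t ω' - μ) ^ 2 | ℱ (t - 1)]) ω ≤ σ ^ 2)
    (hl_pred : ∀ t, 1 ≤ t → StronglyMeasurable[ℱ (t - 1)] (l t))
    (hl_nonneg : ∀ t ω, 1 ≤ t → 0 ≤ l t ω) :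
    ENNReal.ofReal (1 - α) ≤
      P {ω | ∀ t : ℕ, 1 ≤ t →
        (∑ i ∈ Finset.Icc 1 t, φ (l i ω * (X i ω - μ))) ≤
          σ ^ 2 * (∑ i ∈ Finset.Icc 1 t, (l i ω) ^ 2) / 2 + Real.log (1 / α)} := by
  obtain ⟨hα0, hα1⟩ := hα
  have hφm : Measurable φ := hφ_mono.measurable
  have hl_meas : ∀ i, 1 ≤ i → Measurable (l i) := fun i hi =>
    ((hl_pred i hi).mono (ℱ.le _)).measurable
  have hX_meas : ∀ i, Measurable (X i) := fun i =>
    ((hX_adapted i).mono (ℱ.le i)).measurable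
  -- the one-step factors and the candidate supermartingale
  set g : ℕ → Ω → ℝ := fun t ω =>
    Real.exp (φ (l t ω * (X t ω - μ)) - σ ^ 2 * l t ω ^ 2 / 2) with hgdef
  set M : ℕ → Ω → ℝ := fun k ω =>
    Real.exp (∑ i ∈ Finset.Icc 1 k, (φ (l i ω * (X i ω - μ)) - σ ^ 2 * l i ω ^ 2 / 2))
    with hMdef
  have hM0 : M 0 = fun _ => (1 : ℝ) := by
    funext ω; rw [hMdef]; simp
  have hMsucc : ∀ k, M (k + 1) = fun ω => M k ω * g (k + 1) ω := by
    intro k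
    funext ω
    rw [hMdef, hgdef]
    simp only []
    rw [Finset.sum_Icc_succ_top (Nat.one_le_iff_ne_zero.2 (Nat.succ_ne_zero k)), Real.exp_add]
  have hM_pos : ∀ k ω, 0 < M k ω := fun k ω => Real.exp_pos _
  -- the one-step bounds from `catoni_step`
  have hstep : ∀ t, 1 ≤ t → Integrable (g t) P ∧
      ∀ A : Set Ω, MeasurableSet[ℱ (t - 1)] A →
        ∫ ω in A, g t ω ∂P ≤ (P A).toReal := by
    intro t ht
    have hZ : MemLp (fun ω => X t ω - μ) 2 P := (hX_sq t ht).sub (memLp_const μ)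
    have hZm : Measurable fun ω => X t ω - μ := (hX_meas t).sub measurable_const
    have hXi : Integrable (X t) P := (hX_sq t ht).integrable one_le_two
    have hmean' : P[fun ω => X t ω - μ|ℱ (t - 1)] ≤ᵐ[P] fun _ => (0 : ℝ) := by
      have hpi : (fun ω => X t ω - μ) = X t - fun _ => μ := rfl
      have hsub := condExp_sub (m := ℱ (t - 1)) (μ := P) hXi (integrable_const μ)
      rw [← hpi] at hsub
      have hconst : P[fun _ : Ω => μ|ℱ (t - 1)] = fun _ => μ :=
        condExp_const (ℱ.le (t - 1)) μ
      filter_upwards [hsub, hmean t ht] with ω h1 h2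
      rw [h1, Pi.sub_apply, hconst]
      simpa using h2
    have hvar' : P[fun ω => (X t ω - μ) ^ 2|ℱ (t - 1)] ≤ᵐ[P] fun _ => σ ^ 2 := hvar t ht
    exact CatoniAux.catoni_step (ℱ.le (t - 1)) hφ_ub hφm (sq_nonneg σ)
      (hl_pred t ht) (fun ω => hl_nonneg t ω ht) hZm hZ hmean' hvar'
  -- adaptedness of M
  have hM_adapted : ∀ k, StronglyMeasurable[ℱ k] (M k) := by
    intro k
    have hsum : Measurable[ℱ k] fun ω =>
        ∑ i ∈ Finset.Icc 1 k, (φ (l i ω * (X i ω - μ)) - σ ^ 2 * l i ω ^ 2 / 2) := by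
      refine Finset.measurable_sum _ fun i hi => ?_
      obtain ⟨hi1, hik⟩ := Finset.mem_Icc.1 hi
      have hlm : Measurable[ℱ k] (l i) :=
        ((hl_pred i hi1).mono (ℱ.mono (le_trans (Nat.sub_le i 1) hik))).measurable
      have hXm : Measurable[ℱ k] (X i) := ((hX_adapted i).mono (ℱ.mono hik)).measurable
      exact (hφm.comp (hlm.mul (hXm.sub measurable_const))).sub
        ((measurable_const.mul (hlm.pow_const 2)).div_const 2)
    exact (Real.measurable_exp.comp hsum).stronglyMeasurable
  -- uniform bound on the lintegrals of M, and integrability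
  have hlint : ∀ k, ∫⁻ ω, ENNReal.ofReal (M k ω) ∂P ≤ 1 := by
    intro k
    induction k with
    | zero =>
      rw [hM0]
      simp
    | succ k ih =>
      have hsplit : ∀ ω, ENNReal.ofReal (M (k + 1) ω) =
          ENNReal.ofReal (M k ω) * ENNReal.ofReal (g (k + 1) ω) := by
        intro ω
        rw [hMsucc k]
        exact ENNReal.ofReal_mul (hM_pos k ω).le
      have hW : Measurable[ℱ k] fun ω => ENNReal.ofReal (M k ω) :=
        ENNReal.measurable_ofReal.comp (hM_adapted k).measurable
      obtain ⟨hg_int, hg_set⟩ := hstep (k + 1) (Nat.le_add_left 1 k)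
      have hg0 : ∀ ω, 0 ≤ g (k + 1) ω := fun ω => (Real.exp_pos _).le
      have hgm0 : Measurable (g (k + 1)) := by
        apply Real.measurable_exp.comp
        exact (hφm.comp ((hl_meas _ (Nat.le_add_left 1 k)).mul
            ((hX_meas _).sub measurable_const))).sub
          ((measurable_const.mul ((hl_meas _ (Nat.le_add_left 1 k)).pow_const 2)).div_const 2)
      have hgm : Measurable fun ω => ENNReal.ofReal (g (k + 1) ω) :=
        ENNReal.measurable_ofReal.comp hgm0
      have hgsetL : ∀ A : Set Ω, MeasurableSet[ℱ k] A →
          ∫⁻ ω in A, ENNReal.ofReal (g (k + 1) ω) ∂P ≤ P A := by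
        intro A hA
        have hA' : MeasurableSet[ℱ (k + 1 - 1)] A := hA
        rw [← ofReal_integral_eq_lintegral_ofReal hg_int.integrableOn
          (Filter.Eventually.of_forall hg0)]
        calc ENNReal.ofReal (∫ ω in A, g (k + 1) ω ∂P)
            ≤ ENNReal.ofReal ((P A).toReal) := ENNReal.ofReal_le_ofReal (hg_set A hA')
        _ = P A := ENNReal.ofReal_toReal (measure_ne_top _ _)
      calc ∫⁻ ω, ENNReal.ofReal (M (k + 1) ω) ∂P
          = ∫⁻ ω, ENNReal.ofReal (M k ω) * ENNReal.ofReal (g (k + 1) ω) ∂P := by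
            simp_rw [hsplit]
      _ ≤ ∫⁻ ω, ENNReal.ofReal (M k ω) ∂P :=
          CatoniAux.lintegral_mul_le_of_le_on_base (ℱ.le k) P hgm hgsetL hW
      _ ≤ 1 := ih
  have hM_int : ∀ k, Integrable (M k) P := by
    intro k
    refine ⟨((hM_adapted k).mono (ℱ.le k)).aestronglyMeasurable, ?_⟩
    rw [hasFiniteIntegral_iff_ofReal (Filter.Eventually.of_forall fun ω => (hM_pos k ω).le)]
    exact lt_of_le_of_lt (hlint k) ENNReal.one_lt_top
  -- the supermartingale property
  have hsup : Supermartingale M ℱ P := by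
    refine supermartingale_nat hM_adapted hM_int fun k => ?_
    obtain ⟨hg_int, hg_set⟩ := hstep (k + 1) (Nat.le_add_left 1 k)
    have hg_set' : ∀ A : Set Ω, MeasurableSet[ℱ k] A →
        ∫ ω in A, g (k + 1) ω ∂P ≤ (P A).toReal := fun A hA => hg_set A hA
    have hgle1 : P[g (k + 1)|ℱ k] ≤ᵐ[P] fun _ => (1 : ℝ) :=
      CatoniAux.condexp_le_one_of_setIntegral_le (ℱ.le k) hg_int hg_set'
    have hpi : M (k + 1) = M k * g (k + 1) := by
      rw [hMsucc k]; rfl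
    have hprod_int : Integrable (M k * g (k + 1)) P := by
      rw [← hpi]; exact hM_int (k + 1)
    have hmul : P[M k * g (k + 1)|ℱ k] =ᵐ[P] M k * P[g (k + 1)|ℱ k] :=
      condExp_mul_of_stronglyMeasurable_left (hM_adapted k) hprod_int hg_int
    rw [hpi]
    filter_upwards [hmul, hgle1] with ω h1 h2
    rw [h1, Pi.mul_apply]
    calc M k ω * (P[g (k + 1)|ℱ k]) ω ≤ M k ω * 1 :=
          mul_le_mul_of_nonneg_left h2 (hM_pos k ω).le
    _ = M k ω := mul_one _
  -- Ville's inequality at level 1/α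
  set ε : ℝ≥0 := Real.toNNReal (1 / α) with hεdef
  have hε_coe : (ε : ℝ) = 1 / α := Real.coe_toNNReal _ (by positivity)
  have hεcast : (ε : ℝ≥0∞) = ENNReal.ofReal (1 / α) := rfl
  have hint0 : ∫ ω, M 0 ω ∂P = 1 := by rw [hM0]; simp
  set D : ℕ → Set Ω := fun n =>
    {ω | (ε : ℝ) ≤ (range (n + 1)).sup' nonempty_range_add_one fun k => M k ω} with hDdef
  have hville : ∀ n : ℕ, (ε : ℝ≥0∞) * P (D n) ≤ 1 := by
    intro n
    have h := CatoniAux.supermart_maximal hsup (fun i ω => (hM_pos i ω).le) (ε := ε) n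
    rw [hint0, ENNReal.ofReal_one, ENNReal.smul_def] at h
    exact h
  have hD_le : ∀ n, P (D n) ≤ ENNReal.ofReal α := by
    intro n
    calc P (D n) = ENNReal.ofReal α * (ENNReal.ofReal (1 / α) * P (D n)) := by
          rw [← mul_assoc, ← ENNReal.ofReal_mul hα0.le, mul_one_div_cancel (ne_of_gt hα0),
            ENNReal.ofReal_one, one_mul]
    _ ≤ ENNReal.ofReal α * 1 := by
          refine mul_le_mul_right ?_ _
          rw [← hεcast]
          exact hville n
    _ = ENNReal.ofReal α := mul_one _
  -- the bad events
  set S : ℕ → Ω → ℝ := fun t ω => ∑ i ∈ Finset.Icc 1 t, φ (l i ω * (X i ω - μ)) with hSdef2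
  set R : ℕ → Ω → ℝ := fun t ω =>
    σ ^ 2 * (∑ i ∈ Finset.Icc 1 t, l i ω ^ 2) / 2 + Real.log (1 / α) with hRdef
  have hS_meas : ∀ t, Measurable (S t) := fun t =>
    Finset.measurable_sum _ fun i hi =>
      hφm.comp ((hl_meas i (Finset.mem_Icc.1 hi).1).mul ((hX_meas i).sub measurable_const))
  have hR_meas : ∀ t, Measurable (R t) := fun t =>
    (((measurable_const.mul (Finset.measurable_sum _ fun i hi =>
      (hl_meas i (Finset.mem_Icc.1 hi).1).pow_const 2)).div_const 2).add_const _)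
  have hE_meas : ∀ t, MeasurableSet {ω | R t ω < S t ω} := fun t =>
    measurableSet_lt (hR_meas t) (hS_meas t)
  set C : ℕ → Set Ω := fun n =>
    ⋃ (t : ℕ) (_ : 1 ≤ t) (_ : t ≤ n), {ω | R t ω < S t ω} with hCdef
  have hC_meas : ∀ n, MeasurableSet (C n) := fun n =>
    MeasurableSet.iUnion fun t => MeasurableSet.iUnion fun _ =>
      MeasurableSet.iUnion fun _ => hE_meas t
  have hC_mono : Monotone C := by
    intro a b hab ω hω
    rw [hCdef] at hω ⊢
    obtain ⟨t, ht1, hta, hlt⟩ := by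
      simpa only [Set.mem_iUnion] using hω
    simp only [Set.mem_iUnion]
    exact ⟨t, ht1, le_trans hta hab, hlt⟩
  -- M t in terms of S and R
  have hMSR : ∀ t ω, M t ω =
      Real.exp (S t ω - σ ^ 2 * (∑ i ∈ Finset.Icc 1 t, l i ω ^ 2) / 2) := by
    intro t ω
    rw [hMdef, hSdef2]
    simp only []
    congr 1
    rw [Finset.sum_sub_distrib]
    congr 1
    rw [Finset.mul_sum, ← Finset.sum_div]
  -- C n is contained in the maximal event D n
  have hCD : ∀ n, C n ⊆ D n := by
    intro n ω hω
    obtain ⟨t, ht1, htn, hlt⟩ := by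
      simpa only [hCdef, Set.mem_iUnion] using hω
    have hlt' : R t ω < S t ω := hlt
    have hexp : (ε : ℝ) < M t ω := by
      rw [hε_coe, hMSR t ω]
      have hlog : Real.log (1 / α) <
          S t ω - σ ^ 2 * (∑ i ∈ Finset.Icc 1 t, l i ω ^ 2) / 2 := by
        rw [hRdef] at hlt'
        simp only [] at hlt'
        linarith
      calc 1 / α = Real.exp (Real.log (1 / α)) :=
            (Real.exp_log (by positivity)).symm
      _ < _ := Real.exp_lt_exp.2 hlog
    rw [hDdef]
    refine le_trans hexp.le ?_
    exact Finset.le_sup' (fun k => M k ω) (Finset.mem_range.2 (Nat.lt_succ_of_le htn))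
  have hTmeas : MeasurableSet (⋃ n, C n) := MeasurableSet.iUnion hC_meas
  have hT_le : P (⋃ n, C n) ≤ ENNReal.ofReal α := by
    rw [Directed.measure_iUnion (hC_mono.directed_le)]
    exact iSup_le fun n => le_trans (measure_mono (hCD n)) (hD_le n)
  -- identify the good event with the complement of the bad one
  have hset : {ω | ∀ t : ℕ, 1 ≤ t →
      (∑ i ∈ Finset.Icc 1 t, φ (l i ω * (X i ω - μ))) ≤
        σ ^ 2 * (∑ i ∈ Finset.Icc 1 t, (l i ω) ^ 2) / 2 + Real.log (1 / α)} =
      (⋃ n, C n)ᶜ := by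
    ext ω
    simp only [Set.mem_compl_iff, Set.mem_setOf_eq]
    constructor
    · intro h hmem
      rw [Set.mem_iUnion] at hmem
      obtain ⟨n, hn⟩ := hmem
      rw [hCdef] at hn
      simp only [Set.mem_iUnion, Set.mem_setOf_eq] at hn
      obtain ⟨t, ht1, htn, hlt⟩ := hn
      exact absurd (h t ht1) (not_le.2 hlt)
    · intro h t ht1
      by_contra hc
      apply h
      rw [Set.mem_iUnion]
      refine ⟨t, ?_⟩
      rw [hCdef]
      simp only [Set.mem_iUnion, Set.mem_setOf_eq]
      exact ⟨t, ht1, le_rfl, not_le.1 hc⟩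
  rw [hset, prob_compl_eq_one_sub hTmeas]
  calc ENNReal.ofReal (1 - α) = 1 - ENNReal.ofReal α := by
        rw [ENNReal.ofReal_sub _ hα0.le, ENNReal.ofReal_one]
  _ ≤ 1 - P (⋃ n, C n) := tsub_le_tsub_left hT_le 1
end
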